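/- arXiv:0901.2314 — 7 statements merged into one kernel-verified Lean document; each statement's English description precedes it below -/
import Mathlib

section
/- Let n ≥ 4 be even and g ≥ 1. For every choice of signs ε₁, …, ε_{2g} ∈ {1, −1} and every δ ∈ {1, −1}, there exist matrices A₁, …, A_g, B₁, …, B_g ∈ O(n,ℝ) such that det(A_i) = ε_{2i−1} and det(B_i) = ε_{2i} for all i = 1, …, g, and the product of commutators satisfies ∏_{i=1}^{g} [A_i, B_i] = δ·I_n. -/
open Matrix

/-!
Orthogonal `A`, `B` with `A * B = δ • (B * A)` have commutator `δ • 1`, so it suffices to find,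
for any two signs, such a pair with these determinants: with `δ` for the first pair and with `1`
for all the others. Pairs are built block-diagonally from `2 × 2` blocks: `diag(1,s)` and
`diag(1,t)` commute, while `diag(1,-1)` anticommutes with `!![0,-t;1,0]`, of determinant `t`.
An anticommuting pair of `2 × 2` blocks never has both determinants `1`, which is why `n ≥ 4`
is needed: with one block `(!![0,-s;1,0], diag(1,-1))` and the others
`(diag(1,-1), !![0,-t;1,0])`, both determinants can be chosen freely.
-/

namespace Matrix

variable {ι κ : Type*} [Fintype ι] [DecidableEq ι] [Fintype κ] [DecidableEq κ]

def OrthogonalPair (δ : ℝ) (A B : Matrix ι ι ℝ) : Prop :=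
  Aᵀ * A = 1 ∧ Bᵀ * B = 1 ∧ A * B = δ • (B * A)

theorem mul_nonsing_inv_of_transpose_mul_self {A : Matrix ι ι ℝ} (h : Aᵀ * A = 1) :
    A * A⁻¹ = 1 := by
  rw [inv_eq_left_inv h]
  exact mul_eq_one_comm.mp h

namespace OrthogonalPair

variable {δ : ℝ} {A B : Matrix ι ι ℝ}

theorem commutator_eq (h : OrthogonalPair δ A B) : A * B * A⁻¹ * B⁻¹ = δ • 1 := by
  obtain ⟨hA, hB, hAB⟩ := h
  calc A * B * A⁻¹ * B⁻¹ = δ • (B * (A * A⁻¹) * B⁻¹) := by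
        rw [hAB, smul_mul_assoc, smul_mul_assoc, Matrix.mul_assoc B]
    _ = δ • 1 := by rw [mul_nonsing_inv_of_transpose_mul_self hA, Matrix.mul_one,
      mul_nonsing_inv_of_transpose_mul_self hB]

theorem reindex (e : ι ≃ κ) (h : OrthogonalPair δ A B) :
    OrthogonalPair δ (reindex e e A) (reindex e e B) := by
  obtain ⟨hA, hB, hAB⟩ := h
  rw [OrthogonalPair, transpose_reindex, transpose_reindex]
  simp only [← coe_reindexAlgEquiv ℝ ℝ, ← map_mul, ← map_smul, hA, hB, hAB, map_one, and_self]

theorem blockDiagonal {o : Type*} [Fintype o] [DecidableEq o] {fa fb : o → Matrix ι ι ℝ}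
    (h : ∀ k, OrthogonalPair δ (fa k) (fb k)) :
    OrthogonalPair δ (blockDiagonal fa) (blockDiagonal fb) := by
  refine ⟨?_, ?_, ?_⟩
  · rw [blockDiagonal_transpose, ← blockDiagonal_mul, ← blockDiagonal_one]
    exact congrArg Matrix.blockDiagonal (funext fun k => (h k).1)
  · rw [blockDiagonal_transpose, ← blockDiagonal_mul, ← blockDiagonal_one]
    exact congrArg Matrix.blockDiagonal (funext fun k => (h k).2.1)
  · rw [← blockDiagonal_mul, ← blockDiagonal_mul, ← blockDiagonal_smul]
    exact congrArg Matrix.blockDiagonal (funext fun k => (h k).2.2)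

end OrthogonalPair

def signDiag (s : ℝ) : Matrix (Fin 2) (Fin 2) ℝ := !![1, 0; 0, s]

def signAntidiag (t : ℝ) : Matrix (Fin 2) (Fin 2) ℝ := !![0, -t; 1, 0]

theorem det_signDiag (s : ℝ) : (signDiag s).det = s := by simp [signDiag, det_fin_two_of]

theorem det_signAntidiag (t : ℝ) : (signAntidiag t).det = t := by
  simp [signAntidiag, det_fin_two_of]

theorem orthogonalPair_signDiag {s t : ℝ} (hs : s ^ 2 = 1) (ht : t ^ 2 = 1) :
    OrthogonalPair 1 (signDiag s) (signDiag t) := by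
  refine ⟨?_, ?_, ?_⟩ <;> ext i j <;> fin_cases i <;> fin_cases j <;>
    simp [signDiag, mul_apply, Fin.sum_univ_two, ← sq, hs, ht, mul_comm]

theorem orthogonalPair_signDiag_signAntidiag {t : ℝ} (ht : t ^ 2 = 1) :
    OrthogonalPair (-1) (signDiag (-1)) (signAntidiag t) := by
  refine ⟨?_, ?_, ?_⟩ <;> ext i j <;> fin_cases i <;> fin_cases j <;>
    simp [signDiag, signAntidiag, mul_apply, Fin.sum_univ_two, ← sq, ht]

theorem orthogonalPair_signAntidiag_signDiag {s : ℝ} (hs : s ^ 2 = 1) :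
    OrthogonalPair (-1) (signAntidiag s) (signDiag (-1)) := by
  refine ⟨?_, ?_, ?_⟩ <;> ext i j <;> fin_cases i <;> fin_cases j <;>
    simp [signDiag, signAntidiag, mul_apply, Fin.sum_univ_two, ← sq, hs]

theorem exists_orthogonalPair_of_blocks {m : ℕ} {δ x y : ℝ}
    {fa fb : Fin m → Matrix (Fin 2) (Fin 2) ℝ} (h : ∀ k, OrthogonalPair δ (fa k) (fb k))
    (hx : ∏ k, (fa k).det = x) (hy : ∏ k, (fb k).det = y) :
    ∃ A B : Matrix (Fin (2 * m)) (Fin (2 * m)) ℝ, OrthogonalPair δ A B ∧ A.det = x ∧ B.det = y :=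
  ⟨_, _, (OrthogonalPair.blockDiagonal h).reindex finProdFinEquiv,
    by rw [det_reindex_self, det_blockDiagonal, hx],
    by rw [det_reindex_self, det_blockDiagonal, hy]⟩

theorem exists_orthogonalPair_one (m : ℕ) {x y : ℝ} (hx : x ^ 2 = 1) (hy : y ^ 2 = 1) :
    ∃ A B : Matrix (Fin (2 * (m + 1))) (Fin (2 * (m + 1))) ℝ,
      OrthogonalPair 1 A B ∧ A.det = x ∧ B.det = y := by
  refine exists_orthogonalPair_of_blocks (fa := Fin.cons (signDiag x) fun _ => signDiag 1)
    (fb := Fin.cons (signDiag y) fun _ => signDiag 1)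
    (Fin.cases (orthogonalPair_signDiag hx hy) fun _ =>
      orthogonalPair_signDiag (one_pow 2) (one_pow 2))
    ?_ ?_ <;> simp [Fin.prod_univ_succ, det_signDiag]

theorem exists_orthogonalPair_neg_one (m : ℕ) {x y : ℝ} (hx : x ^ 2 = 1) (hy : y ^ 2 = 1) :
    ∃ A B : Matrix (Fin (2 * (m + 2))) (Fin (2 * (m + 2))) ℝ,
      OrthogonalPair (-1) A B ∧ A.det = x ∧ B.det = y := by
  -- compensates the `m + 1` blocks `diag(1,-1)` of `A`
  set s := x * (-1) ^ (m + 1)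
  have hs : s ^ 2 = 1 := by simp [s, mul_pow, hx, ← pow_mul, pow_mul']
  set t : Fin (m + 1) → ℝ := Fin.cons (-y) fun _ => 1
  have ht : ∀ j, t j ^ 2 = 1 := Fin.cases (by simpa [t] using hy) fun _ => by simp [t]
  refine exists_orthogonalPair_of_blocks
    (fa := Fin.cons (signAntidiag s) fun _ => signDiag (-1))
    (fb := Fin.cons (signDiag (-1)) fun j => signAntidiag (t j))
    (Fin.cases (orthogonalPair_signAntidiag_signDiag hs)
      fun j => orthogonalPair_signDiag_signAntidiag (ht j)) ?_ ?_
  · simp [Fin.prod_univ_succ, det_signDiag, det_signAntidiag, s, mul_assoc, ← mul_pow]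
  · simp [Fin.prod_univ_succ, det_signDiag, det_signAntidiag, t]

theorem exists_orthogonalPair {n : ℕ} (hn4 : 4 ≤ n) (hn : Even n) {x y δ : ℝ}
    (hx : x ^ 2 = 1) (hy : y ^ 2 = 1) (hδ : δ = 1 ∨ δ = -1) :
    ∃ A B : Matrix (Fin n) (Fin n) ℝ, OrthogonalPair δ A B ∧ A.det = x ∧ B.det = y := by
  obtain ⟨m, rfl⟩ : ∃ m, n = 2 * (m + 2) := by
    obtain ⟨k, rfl⟩ := hn
    exact ⟨k - 2, by omega⟩
  rcases hδ with rfl | rfl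
  · exact exists_orthogonalPair_one (m + 1) hx hy
  · exact exists_orthogonalPair_neg_one m hx hy

end Matrix

/-- For `n ≥ 4` even and `g ≥ 1`, any prescribed determinant signs
`ε₁, …, ε_{2g} ∈ {1, -1}` and any sign `δ ∈ {1, -1}` are realized by orthogonal
matrices `A₁, …, A_g, B₁, …, B_g ∈ O(n,ℝ)` with `det (A i) = ε_{2i-1}`,
`det (B i) = ε_{2i}` and `∏ [A_i, B_i] = δ • 1`. -/
theorem stmt_0 (n g : ℕ) (hn4 : 4 ≤ n) (hn : Even n) (hg : 1 ≤ g)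
    (ε : Fin (2 * g) → ℝ) (hε : ∀ i, ε i = 1 ∨ ε i = -1)
    (δ : ℝ) (hδ : δ = 1 ∨ δ = -1) :
    ∃ A B : Fin g → Matrix (Fin n) (Fin n) ℝ,
      (∀ i, (A i)ᵀ * A i = 1) ∧
      (∀ i, (B i)ᵀ * B i = 1) ∧
      (∀ i : Fin g, (A i).det = ε ⟨2 * i.val, by have := i.isLt; omega⟩) ∧
      (∀ i : Fin g, (B i).det = ε ⟨2 * i.val + 1, by have := i.isLt; omega⟩) ∧
      (((List.finRange g).map
          (fun i => A i * B i * (A i)⁻¹ * (B i)⁻¹)).prod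
        = δ • (1 : Matrix (Fin n) (Fin n) ℝ)) := by
  obtain ⟨g, rfl⟩ : ∃ g', g = g' + 1 := ⟨g - 1, by omega⟩
  have hsign : ∀ i, ε i ^ 2 = 1 := fun i => by rcases hε i with h | h <;> simp [h]
  have hpair : ∀ i : Fin (g + 1), ∃ A B : Matrix (Fin n) (Fin n) ℝ,
      OrthogonalPair (if i = 0 then δ else 1) A B ∧
        A.det = ε ⟨2 * i.val, by omega⟩ ∧ B.det = ε ⟨2 * i.val + 1, by omega⟩ := fun i =>
    exists_orthogonalPair hn4 hn (hsign _) (hsign _) (by split_ifs <;> simp [hδ])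
  choose A B hAB hdetA hdetB using hpair
  refine ⟨A, B, fun i => (hAB i).1, fun i => (hAB i).2.1, hdetA, hdetB, ?_⟩
  simp only [fun i => (hAB i).commutator_eq, List.finRange_succ, List.map_cons, List.prod_cons,
    List.map_map]
  simp [Function.comp_def, Fin.succ_ne_zero]
end

section
/- For every even n ≥ 2 there exist matrices X, X′ ∈ O(n,ℝ) with X·X′ = −X′·X and det(X) = det(X′) = (−1)^{n/2}. -/
open Matrix Kronecker

/-- For every even `n ≥ 2` there are anti-commuting orthogonal matrices
`X, X' ∈ O(n,ℝ)` with `det X = det X' = (-1)^(n/2)`. -/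
theorem stmt_2 (n : ℕ) (hn2 : 2 ≤ n) (hn : Even n) :
    ∃ X X' : Matrix (Fin n) (Fin n) ℝ,
      Xᵀ * X = 1 ∧ X'ᵀ * X' = 1 ∧
      X * X' = -(X' * X) ∧
      X.det = (-1 : ℝ) ^ (n / 2) ∧ X'.det = (-1 : ℝ) ^ (n / 2) := by
  obtain ⟨m, hm⟩ := hn
  have hm2 : n = m * 2 := by omega
  have hdiv : n / 2 = m := by omega
  set A : Matrix (Fin 2) (Fin 2) ℝ := !![1, 0; 0, -1] with hA
  set B : Matrix (Fin 2) (Fin 2) ℝ := !![0, 1; 1, 0] with hB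
  let e : Fin m × Fin 2 ≃ Fin n := finProdFinEquiv.trans (finCongr hm2.symm)
  have key : ∀ M : Matrix (Fin 2) (Fin 2) ℝ,
      Mᵀ * M = 1 → M.det = -1 →
      ∀ C : Matrix (Fin n) (Fin n) ℝ, C = ((1 : Matrix (Fin m) (Fin m) ℝ) ⊗ₖ M).submatrix
        e.symm e.symm → Cᵀ * C = 1 ∧ C.det = (-1 : ℝ) ^ (n / 2) := by
    intro M hMo hMd C hC
    subst hC
    constructor
    · rw [transpose_submatrix, submatrix_mul_equiv, ← kroneckerMap_transpose,
        transpose_one, ← mul_kronecker_mul, one_mul, hMo, one_kronecker_one,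
        submatrix_one_equiv]
    · rw [det_submatrix_equiv_self, det_kronecker, hMd, det_one, one_pow, one_mul, hdiv]
      simp [Fintype.card_fin]
  have hAo : Aᵀ * A = 1 := by
    rw [hA]; ext i j; fin_cases i <;> fin_cases j <;>
      simp [Matrix.mul_apply, Fin.sum_univ_two, Matrix.one_apply, Matrix.transpose_apply, Matrix.vecHead, Matrix.vecTail]
  have hBo : Bᵀ * B = 1 := by
    rw [hB]; ext i j; fin_cases i <;> fin_cases j <;>
      simp [Matrix.mul_apply, Fin.sum_univ_two, Matrix.one_apply, Matrix.transpose_apply, Matrix.vecHead, Matrix.vecTail]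
  have hAd : A.det = -1 := by rw [hA]; simp [Matrix.det_fin_two_of]
  have hBd : B.det = -1 := by rw [hB]; simp [Matrix.det_fin_two_of]
  refine ⟨((1 : Matrix (Fin m) (Fin m) ℝ) ⊗ₖ A).submatrix e.symm e.symm,
    ((1 : Matrix (Fin m) (Fin m) ℝ) ⊗ₖ B).submatrix e.symm e.symm, ?_, ?_, ?_, ?_, ?_⟩
  · exact (key A hAo hAd _ rfl).1
  · exact (key B hBo hBd _ rfl).1
  · rw [submatrix_mul_equiv, submatrix_mul_equiv, ← mul_kronecker_mul, ← mul_kronecker_mul,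
      one_mul]
    have hAB : A * B = -(B * A) := by
      rw [hA, hB]; ext i j; fin_cases i <;> fin_cases j <;>
        simp [Matrix.mul_apply, Fin.sum_univ_two]
    rw [hAB]
    ext i j
    simp
  · exact (key A hAo hAd _ rfl).2
  · exact (key B hBo hBd _ rfl).2
end

section
/- Let R be a commutative ring, M an R-module, Q a quadratic form on M, and n an even natural number. Let e : Fin n → M be an R-basis of M whose vectors are pairwise Q-orthogonal (the polar form of Q vanishes on (e i, e j) for i ≠ j), and let ω = ι(e 0)·ι(e 1)⋯ι(e (n−1)) be the volume element in the Clifford algebra of Q. Then ω commutes with every element of the even part evenOdd Q 0 of the Clifford algebra, and ω·x = −x·ω for every element x of the odd part evenOdd Q 1. -/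
/-!
Moving `ι(b j)` through the product `ω` past the `n - 1` other factors, each of which
anticommutes with it by orthogonality, gives `ω ι(b j) = (-1)^(n-1) ι(b j) ω = -ι(b j) ω`.
By linearity `ω` anticommutes with all of `ι(M)`, hence `ω x = involute x * ω` for every `x`,
and the grade involution is `1` on the even part and `-1` on the odd part.
-/

open CliffordAlgebra

theorem List.mul_prod_eq_neg_one_pow_smul {A : Type*} [Ring A] {a : A} {l : List A}
    (h : ∀ x ∈ l, a * x = -(x * a)) : a * l.prod = (-1 : ℤ) ^ l.length • (l.prod * a) := by
  induction l with
  | nil => simp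
  | cons x l ih =>
    rw [List.forall_mem_cons] at h
    rw [List.prod_cons, ← mul_assoc, h.1, neg_mul, mul_assoc, ih h.2, mul_smul_comm,
      List.length_cons, pow_succ, mul_neg_one, neg_smul, mul_assoc]

theorem List.prod_mul_eq_neg_one_pow_smul {A : Type*} [Ring A] {a : A} {l : List A}
    (h : ∀ x ∈ l, a * x = -(x * a)) : l.prod * a = (-1 : ℤ) ^ l.length • (a * l.prod) := by
  rw [List.mul_prod_eq_neg_one_pow_smul h, smul_smul, ← mul_pow, neg_one_mul, neg_neg, one_pow,
    one_smul]

theorem neg_one_pow_eq_neg_neg_one_pow_of_even_add_one {s t : ℕ} (h : Even (s + t + 1)) :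
    (-1 : ℤ) ^ t = -(-1) ^ s := by
  have h : (-1 : ℤ) ^ (s + t + 1) = 1 := h.neg_one_pow
  rw [pow_succ, pow_add] at h
  rcases neg_one_pow_eq_or ℤ s with hs | hs <;> rw [hs] at h ⊢ <;> linarith

namespace CliffordAlgebra

variable {R M : Type*} [CommRing R] [AddCommGroup M] [Module R M] {Q : QuadraticForm R M}

theorem mul_eq_involute_mul {ω : CliffordAlgebra Q} (h : ∀ m, ω * ι Q m = -(ι Q m * ω))
    (x : CliffordAlgebra Q) : ω * x = involute x * ω := by
  induction x using CliffordAlgebra.induction with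
  | algebraMap r => rw [AlgHom.commutes, Algebra.commutes]
  | ι m => rw [h, involute_ι, neg_mul]
  | mul x y hx hy => rw [← mul_assoc, hx, mul_assoc, hy, map_mul, mul_assoc]
  | add x y hx hy => rw [mul_add, hx, hy, map_add, add_mul]

theorem prod_map_ι_mul_ι_of_isOrtho {κ : Type*} {v : κ → M}
    (horth : Pairwise fun i j => Q.IsOrtho (v i) (v j)) {l : List κ} (hl : l.Nodup)
    (heven : Even l.length) {j : κ} (hj : j ∈ l) :
    (l.map fun i => ι Q (v i)).prod * ι Q (v j) =
      -(ι Q (v j) * (l.map fun i => ι Q (v i)).prod) := by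
  obtain ⟨s, t, rfl⟩ := List.append_of_mem hj
  have hst : j ∉ s ∧ j ∉ t := by
    rw [List.nodup_append, List.nodup_cons] at hl
    exact ⟨fun h => hl.2.2 j h j List.mem_cons_self rfl, hl.2.1.1⟩
  have hanti : ∀ l : List κ, j ∉ l →
      ∀ x ∈ l.map fun i => ι Q (v i), ι Q (v j) * x = -(x * ι Q (v j)) := by
    intro l hl x hx
    obtain ⟨i, hi, rfl⟩ := List.mem_map.mp hx
    exact ι_mul_ι_comm_of_isOrtho (horth fun hji => hl (hji ▸ hi))
  have hP := List.mul_prod_eq_neg_one_pow_smul (hanti s hst.1)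
  have hT := List.prod_mul_eq_neg_one_pow_smul (hanti t hst.2)
  have hsign : (-1 : ℤ) ^ t.length = -(-1) ^ s.length :=
    neg_one_pow_eq_neg_neg_one_pow_of_even_add_one (by simpa [← add_assoc] using heven)
  simp only [List.map_append, List.map_cons, List.prod_append, List.prod_cons,
    List.length_map] at hP hT ⊢
  simp only [mul_assoc]
  rw [hT, mul_smul_comm, mul_smul_comm, ← mul_assoc _ (s.map fun i => ι Q (v i)).prod, hP,
    smul_mul_assoc, hsign, neg_smul, mul_assoc]

end CliffordAlgebra

/-- For `n` even and an orthogonal basis `b` of `M`, the volume element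
`ω = ι(b 0)⋯ι(b (n-1))` commutes with the even part and anti-commutes with the
odd part of the Clifford algebra of `Q`. -/
theorem stmt_6 {R M : Type*} [CommRing R] [AddCommGroup M] [Module R M]
    (Q : QuadraticForm R M) (n : ℕ) (hn : Even n) (b : Module.Basis (Fin n) R M)
    (horth : ∀ i j, i ≠ j → QuadraticMap.polar Q (b i) (b j) = 0) :
    (∀ x ∈ CliffordAlgebra.evenOdd Q 0,
        ((List.finRange n).map (fun i => CliffordAlgebra.ι Q (b i))).prod * x
          = x * ((List.finRange n).map (fun i => CliffordAlgebra.ι Q (b i))).prod) ∧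
    (∀ x ∈ CliffordAlgebra.evenOdd Q 1,
        ((List.finRange n).map (fun i => CliffordAlgebra.ι Q (b i))).prod * x
          = -(x * ((List.finRange n).map (fun i => CliffordAlgebra.ι Q (b i))).prod)) := by
  set ω := ((List.finRange n).map (fun i => ι Q (b i))).prod
  have hortho : Pairwise fun i j => Q.IsOrtho (b i) (b j) := fun i j hij =>
    QuadraticMap.isOrtho_polarBilin.mp (horth i j hij)
  have hbasis : LinearMap.mulLeft R ω ∘ₗ ι Q = -(LinearMap.mulRight R ω ∘ₗ ι Q) :=
    b.ext fun j => prod_map_ι_mul_ι_of_isOrtho hortho (List.nodup_finRange n)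
      (by rwa [List.length_finRange]) (List.mem_finRange j)
  have hanti : ∀ m, ω * ι Q m = -(ι Q m * ω) := LinearMap.congr_fun hbasis
  exact ⟨fun x hx => by rw [mul_eq_involute_mul hanti, involute_eq_of_mem_even hx],
    fun x hx => by rw [mul_eq_involute_mul hanti, involute_eq_of_mem_odd hx, neg_mul]⟩
end

section
/- Let k be a field of characteristic different from 2 and n ≥ 1. Let N be the n×n matrix over k with entries N_{i,j} = 1 if i = j+1 and 0 otherwise (the regular nilpotent lower Jordan block), and let J be the n×n antidiagonal matrix with J_{i,j} = 1 if i + j = n + 1 and 0 otherwise. If g is an n×n matrix over k satisfying N·g = g·N and gᵀ·J = −J·g, then g = 0. -/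
open Matrix

/-- Over a field of characteristic `≠ 2`, if `g` commutes with the regular
nilpotent lower Jordan block `N` and is skew with respect to the antidiagonal
form `J` (i.e. `gᵀJ = -Jg`), then `g = 0`. -/
theorem stmt_9 {k : Type*} [Field k] (h2 : (2 : k) ≠ 0) (n : ℕ) (hn : 1 ≤ n)
    (N J g : Matrix (Fin n) (Fin n) k)
    (hN : ∀ i j, N i j = if (i : ℕ) = (j : ℕ) + 1 then 1 else 0)
    (hJ : ∀ i j, J i j = if (i : ℕ) + (j : ℕ) + 1 = n then 1 else 0)
    (hcomm : N * g = g * N) (hskew : gᵀ * J = -(J * g)) : g = 0 := by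
  have gcongr : ∀ (a b c d : Fin n), a.1 = c.1 → b.1 = d.1 → g a b = g c d := by
    intro a b c d h1 h2'
    congr 1 <;> exact Fin.ext ‹_›
  set rev : Fin n → Fin n := fun x => ⟨n - 1 - x.1, by omega⟩ with hrev
  have hrevrev : ∀ x : Fin n, rev (rev x) = x := by
    intro x
    apply Fin.ext
    have := x.2
    simp only [hrev]
    omega
  -- skew condition entrywise
  have skew : ∀ i j : Fin n, g (rev j) i = - g (rev i) j := by
    intro i j
    have h := congrFun (congrFun hskew i) j
    simp only [Matrix.mul_apply, Matrix.neg_apply, Matrix.transpose_apply] at h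
    have hL : ∑ l, g l i * J l j = g (rev j) i := by
      rw [Fintype.sum_eq_single (rev j)]
      · rw [hJ]
        rw [if_pos (by have := j.2; simp only [hrev]; omega), mul_one]
      · intro l hl
        rw [hJ, if_neg, mul_zero]
        intro hc
        apply hl
        apply Fin.ext
        simp only [hrev]
        omega
    have hR : ∑ l, J i l * g l j = g (rev i) j := by
      rw [Fintype.sum_eq_single (rev i)]
      · rw [hJ]
        rw [if_pos (by have := i.2; simp only [hrev]; omega), one_mul]
      · intro l hl
        rw [hJ, if_neg, zero_mul]
        intro hc
        apply hl
        apply Fin.ext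
        simp only [hrev]
        omega
    rw [hL, hR] at h
    exact h
  -- commutation: shift along diagonals
  have shift : ∀ (a b : ℕ) (ha : a + 1 < n) (hb : b + 1 < n),
      g ⟨a + 1, ha⟩ ⟨b + 1, hb⟩ = g ⟨a, by omega⟩ ⟨b, by omega⟩ := by
    intro a b ha hb
    have h := congrFun (congrFun hcomm ⟨a + 1, ha⟩) ⟨b, by omega⟩
    simp only [Matrix.mul_apply] at h
    have hL : ∑ l, N ⟨a + 1, ha⟩ l * g l ⟨b, by omega⟩ = g ⟨a, by omega⟩ ⟨b, by omega⟩ := by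
      rw [Fintype.sum_eq_single (⟨a, by omega⟩ : Fin n)]
      · rw [hN, if_pos rfl, one_mul]
      · intro l hl
        rw [hN, if_neg, zero_mul]
        intro hc
        apply hl
        exact Fin.ext (by simp only [Fin.val_mk] at hc ⊢; omega)
    have hR : ∑ l, g ⟨a + 1, ha⟩ l * N l ⟨b, by omega⟩ = g ⟨a + 1, ha⟩ ⟨b + 1, hb⟩ := by
      rw [Fintype.sum_eq_single (⟨b + 1, hb⟩ : Fin n)]
      · rw [hN, if_pos rfl, mul_one]
      · intro l hl
        rw [hN, if_neg, mul_zero]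
        intro hc
        apply hl
        exact Fin.ext hc
    rw [hL, hR] at h
    exact h.symm
  have diag : ∀ (t a b : ℕ) (ha : a + t < n) (hb : b + t < n),
      g ⟨a + t, ha⟩ ⟨b + t, hb⟩ = g ⟨a, by omega⟩ ⟨b, by omega⟩ := by
    intro t
    induction t with
    | zero => intro a b ha hb; rfl
    | succ t ih =>
      intro a b ha hb
      have h1 : g ⟨a + (t + 1), ha⟩ ⟨b + (t + 1), hb⟩
          = g ⟨a + t, by omega⟩ ⟨b + t, by omega⟩ := by
        have := shift (a + t) (b + t) (by omega) (by omega)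
        refine (gcongr _ _ _ _ (by simp only [Fin.val_mk]; omega) (by simp only [Fin.val_mk]; omega)).trans (this.trans ?_)
        rfl
      rw [h1, ih]
  ext i j
  simp only [Matrix.zero_apply]
  have key : g i j = - g (rev j) (rev i) := by
    have h := skew j (rev i)
    rwa [hrevrev] at h
  have keq : g (rev j) (rev i) = g i j := by
    have hi := i.2
    have hj := j.2
    rcases le_or_gt (i.1 + j.1 + 1) n with hle | hlt
    · have h := diag (n - 1 - i.1 - j.1) i.1 j.1 (by omega) (by omega)
      calc g (rev j) (rev i)
          = g ⟨i.1 + (n - 1 - i.1 - j.1), by omega⟩ ⟨j.1 + (n - 1 - i.1 - j.1), by omega⟩ :=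
            gcongr _ _ _ _ (by simp only [hrev]; omega) (by simp only [hrev]; omega)
        _ = g ⟨i.1, i.2⟩ ⟨j.1, j.2⟩ := h
        _ = g i j := gcongr _ _ _ _ rfl rfl
    · have h := diag (i.1 + j.1 + 1 - n) (n - 1 - j.1) (n - 1 - i.1) (by omega) (by omega)
      calc g (rev j) (rev i)
          = g ⟨n - 1 - j.1, by omega⟩ ⟨n - 1 - i.1, by omega⟩ :=
            gcongr _ _ _ _ (by simp only [hrev]) (by simp only [hrev])
        _ = g i j := by
            rw [← h]
            exact gcongr _ _ _ _ (by simp only [Fin.val_mk]; omega) (by simp only [Fin.val_mk]; omega)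
  rw [keq] at key
  have h2g : (2 : k) * g i j = 0 := by linear_combination key
  exact (mul_eq_zero.mp h2g).resolve_left h2
end

section
/- Let n ≥ 1 and 1 ≤ k ≤ n − 1. Let N be the n×n complex matrix with entries N_{i,j} = 1 if i = j+1 and 0 otherwise, and let J be the n×n antidiagonal matrix with J_{i,j} = 1 if i + j = n + 1 and 0 otherwise. Let U_k⁺ be the complex vector space of n×n matrices g with g_{i,j} = 0 unless i = j + k and gᵀ·J = −J·g, and let U_{k+1}⁻ be the space of n×n matrices h with h_{i,j} = 0 unless i = j + k + 1 and hᵀ·J = J·h. Then the linear map g ↦ N·g − g·N restricts to a linear isomorphism from U_k⁺ onto U_{k+1}⁻. -/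
open Matrix

/-- Auxiliary: the single nonzero "diagonal" entry function of a weight-`k` matrix. -/
noncomputable def stmt10ag (n k : ℕ) (g : Matrix (Fin n) (Fin n) ℂ) (t : ℕ) : ℂ :=
  if ht : t + k < n then g ⟨t + k, ht⟩ ⟨t, by omega⟩ else 0

lemma stmt10ag_pos (n k : ℕ) (g : Matrix (Fin n) (Fin n) ℂ) (t : ℕ) (ht : t + k < n) :
    stmt10ag n k g t = g ⟨t + k, ht⟩ ⟨t, by omega⟩ := dif_pos ht

lemma stmt10ag_neg (n k : ℕ) (g : Matrix (Fin n) (Fin n) ℂ) (t : ℕ) (ht : ¬ t + k < n) :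
    stmt10ag n k g t = 0 := dif_neg ht

/-- Auxiliary reflection-sum identity. -/
lemma stmt10_sum_reflect (b : ℕ → ℂ) (M i j : ℕ) (hij : i + j = M + 1)
    (hsym : ∀ t, t ≤ M → b (M - t) = b t)
    (hzero : ∀ t, M < t → b t = 0) :
    (∑ t ∈ Finset.range i, b t) + (∑ t ∈ Finset.range j, b t)
      = ∑ t ∈ Finset.range (M + 1), b t := by
  have h1 : ∑ t ∈ Finset.range (M + 1), b t
      = (∑ t ∈ Finset.range j, b t) + ∑ t ∈ Finset.Ico j (M + 1), b t := by
    rw [Finset.range_eq_Ico, ← Finset.sum_Ico_consecutive b (Nat.zero_le j) (by omega),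
      ← Finset.range_eq_Ico]
  have h2 : ∑ t ∈ Finset.range i, b t = ∑ t ∈ Finset.Ico j (M + 1), b t := by
    refine Finset.sum_nbij' (fun t => M - t) (fun t => M - t) ?_ ?_ ?_ ?_ ?_
    · intro a ha; simp only [Finset.mem_range] at ha; simp only [Finset.mem_Ico]; omega
    · intro a ha; simp only [Finset.mem_Ico] at ha; simp only [Finset.mem_range]; omega
    · intro a ha; simp only [Finset.mem_range] at ha; show M - (M - a) = a; omega
    · intro a ha; simp only [Finset.mem_Ico] at ha; show M - (M - a) = a; omega
    · intro a ha; simp only [Finset.mem_range] at ha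
      exact (hsym a (by omega)).symm
  rw [h1, h2]; ring

set_option maxHeartbeats 4000000 in
/-- For `1 ≤ k ≤ n-1`, the linear map `g ↦ N·g - g·N` (with `N` the regular
nilpotent lower Jordan block) restricts to a linear isomorphism from the space
`U_k⁺` of weight-`k` matrices that are skew for the antidiagonal form `J` onto
the space `U_{k+1}⁻` of weight-`(k+1)` matrices that are symmetric for `J`. -/
theorem stmt_10 (n k : ℕ) (hn : 1 ≤ n) (hk1 : 1 ≤ k) (hk : k ≤ n - 1)
    (N J : Matrix (Fin n) (Fin n) ℂ)
    (hN : ∀ i j, N i j = if (i : ℕ) = (j : ℕ) + 1 then 1 else 0)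
    (hJ : ∀ i j, J i j = if (i : ℕ) + (j : ℕ) + 1 = n then 1 else 0) :
    Set.BijOn (fun g => N * g - g * N)
      {g : Matrix (Fin n) (Fin n) ℂ |
        (∀ (i j : Fin n), (i : ℕ) ≠ (j : ℕ) + k → g i j = 0) ∧ gᵀ * J = -(J * g)}
      {h : Matrix (Fin n) (Fin n) ℂ |
        (∀ (i j : Fin n), (i : ℕ) ≠ (j : ℕ) + k + 1 → h i j = 0) ∧ hᵀ * J = J * h} := by
  have hkn : k < n := by omega
  -- entry formulas for multiplication by J
  have mulJ : ∀ (A : Matrix (Fin n) (Fin n) ℂ) (i j : Fin n), (A * J) i j = A i j.rev := by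
    intro A i j
    rw [Matrix.mul_apply]
    have key : ∀ m : Fin n, A i m * J m j = if m = j.rev then A i m else 0 := by
      intro m
      rw [hJ]
      have : ((m : ℕ) + (j : ℕ) + 1 = n) ↔ m = j.rev := by
        rw [Fin.ext_iff, Fin.val_rev]; omega
      rw [if_congr this rfl rfl]
      split <;> simp
    simp only [key]
    simp
  have Jmul : ∀ (A : Matrix (Fin n) (Fin n) ℂ) (i j : Fin n), (J * A) i j = A i.rev j := by
    intro A i j
    rw [Matrix.mul_apply]
    have key : ∀ m : Fin n, J i m * A m j = if m = i.rev then A m j else 0 := by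
      intro m
      rw [hJ]
      have : ((i : ℕ) + (m : ℕ) + 1 = n) ↔ m = i.rev := by
        rw [Fin.ext_iff, Fin.val_rev]; omega
      rw [if_congr this rfl rfl]
      split <;> simp_all
    simp only [key]
    simp
  -- entry formulas for multiplication by N
  have NA : ∀ (A : Matrix (Fin n) (Fin n) ℂ) (i j : Fin n),
      (N * A) i j = if h : 1 ≤ (i : ℕ) then A ⟨(i : ℕ) - 1, by omega⟩ j else 0 := by
    intro A i j
    rw [Matrix.mul_apply]
    split
    · next h =>
      have key : ∀ m : Fin n, N i m * A m j
          = if m = (⟨(i : ℕ) - 1, by omega⟩ : Fin n) then A m j else 0 := by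
        intro m
        rw [hN]
        have : ((i : ℕ) = (m : ℕ) + 1) ↔ m = (⟨(i : ℕ) - 1, by omega⟩ : Fin n) := by
          rw [Fin.ext_iff]; simp; omega
        rw [if_congr this rfl rfl]
        split <;> simp_all
      simp only [key]
      simp
    · next h =>
      have key : ∀ m : Fin n, N i m * A m j = 0 := by
        intro m; rw [hN, if_neg (by omega), zero_mul]
      simp only [key]
      simp
  have AN : ∀ (A : Matrix (Fin n) (Fin n) ℂ) (i j : Fin n),
      (A * N) i j = if h : (j : ℕ) + 1 < n then A i ⟨(j : ℕ) + 1, h⟩ else 0 := by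
    intro A i j
    rw [Matrix.mul_apply]
    split
    · next h =>
      have key : ∀ m : Fin n, A i m * N m j
          = if m = (⟨(j : ℕ) + 1, h⟩ : Fin n) then A i m else 0 := by
        intro m
        rw [hN]
        have : ((m : ℕ) = (j : ℕ) + 1) ↔ m = (⟨(j : ℕ) + 1, h⟩ : Fin n) := by
          rw [Fin.ext_iff]
        rw [if_congr this rfl rfl]
        split <;> simp
      simp only [key]
      simp
    · next h =>
      have key : ∀ m : Fin n, A i m * N m j = 0 := by
        intro m; rw [hN, if_neg (by omega), mul_zero]
      simp only [key]
      simp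
  -- pointwise characterizations of the two symmetry conditions
  have skew_iff : ∀ g : Matrix (Fin n) (Fin n) ℂ,
      (gᵀ * J = -(J * g)) ↔ ∀ i j : Fin n, g j.rev i = - g i.rev j := by
    intro g
    rw [← Matrix.ext_iff]
    constructor
    · intro H i j
      have := H i j
      rwa [mulJ, Matrix.transpose_apply, Matrix.neg_apply, Jmul] at this
    · intro H i j
      rw [mulJ, Matrix.transpose_apply, Matrix.neg_apply, Jmul]
      exact H i j
  have symm_iff : ∀ h : Matrix (Fin n) (Fin n) ℂ,
      (hᵀ * J = J * h) ↔ ∀ i j : Fin n, h j.rev i = h i.rev j := by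
    intro g
    rw [← Matrix.ext_iff]
    constructor
    · intro H i j
      have := H i j
      rwa [mulJ, Matrix.transpose_apply, Jmul] at this
    · intro H i j
      rw [mulJ, Matrix.transpose_apply, Jmul]
      exact H i j
  -- entry formula for the commutator map
  have mapEntry : ∀ g : Matrix (Fin n) (Fin n) ℂ,
      (∀ i j : Fin n, (i : ℕ) ≠ (j : ℕ) + k → g i j = 0) →
      ∀ i j : Fin n, (N * g - g * N) i j =
        if (i : ℕ) = (j : ℕ) + k + 1 then stmt10ag n k g j - stmt10ag n k g ((j : ℕ) + 1)
        else 0 := by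
    intro g hgs i j
    rw [Matrix.sub_apply, NA, AN]
    by_cases hij : (i : ℕ) = (j : ℕ) + k + 1
    · have h1 : 1 ≤ (i : ℕ) := by omega
      have h2 : (j : ℕ) + 1 < n := by have := i.isLt; omega
      rw [dif_pos h1, dif_pos h2, if_pos hij]
      have hb1 : (j : ℕ) + k < n := by have := i.isLt; omega
      have hb2 : (j : ℕ) + 1 + k < n := by have := i.isLt; omega
      have e1 : g ⟨(i : ℕ) - 1, by omega⟩ j = stmt10ag n k g j := by
        rw [stmt10ag_pos n k g j hb1]
        exact congrArg₂ g (Fin.ext (by simp; omega)) (Fin.ext rfl)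
      have e2 : g i ⟨(j : ℕ) + 1, h2⟩ = stmt10ag n k g ((j : ℕ) + 1) := by
        rw [stmt10ag_pos n k g ((j : ℕ) + 1) hb2]
        exact congrArg₂ g (Fin.ext (by simp; omega)) (Fin.ext rfl)
      rw [e1, e2]
    · rw [if_neg hij]
      have e1 : (if h : 1 ≤ (i : ℕ) then g ⟨(i : ℕ) - 1, by omega⟩ j else 0) = 0 := by
        split
        · exact hgs _ _ (by simp; omega)
        · rfl
      have e2 : (if h : (j : ℕ) + 1 < n then g i ⟨(j : ℕ) + 1, h⟩ else 0) = 0 := by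
        split
        · exact hgs _ _ (by simp; omega)
        · rfl
      rw [e1, e2, sub_zero]
  -- the weight-k entry function determines the matrix
  have gform : ∀ g : Matrix (Fin n) (Fin n) ℂ,
      (∀ i j : Fin n, (i : ℕ) ≠ (j : ℕ) + k → g i j = 0) →
      ∀ i j : Fin n, g i j = if (i : ℕ) = (j : ℕ) + k then stmt10ag n k g (j : ℕ) else 0 := by
    intro g hgs i j
    by_cases hij : (i : ℕ) = (j : ℕ) + k
    · rw [if_pos hij, stmt10ag_pos n k g (j : ℕ) (by have := i.isLt; omega)]
      exact congrArg₂ g (Fin.ext (by simp; omega)) (Fin.ext rfl)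
    · rw [if_neg hij]; exact hgs i j hij
  -- skew condition in ℕ-indexed form
  have skew_nat : ∀ g : Matrix (Fin n) (Fin n) ℂ,
      (∀ i j : Fin n, g j.rev i = - g i.rev j) →
      ∀ s t : ℕ, s + t + k + 1 = n → stmt10ag n k g s = - stmt10ag n k g t := by
    intro g hga s t hst
    have hs : s < n := by omega
    have ht : t < n := by omega
    have key := hga ⟨s, hs⟩ ⟨t, ht⟩
    have h1 : (Fin.rev (⟨t, ht⟩ : Fin n)) = (⟨s + k, by omega⟩ : Fin n) := by
      apply Fin.ext; rw [Fin.val_rev]; simp; omega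
    have h2 : (Fin.rev (⟨s, hs⟩ : Fin n)) = (⟨t + k, by omega⟩ : Fin n) := by
      apply Fin.ext; rw [Fin.val_rev]; simp; omega
    rw [h1, h2] at key
    rw [stmt10ag_pos n k g s (by omega), stmt10ag_pos n k g t (by omega)]
    exact key
  refine ⟨?_, ?_, ?_⟩
  -- MapsTo
  · intro g hg
    obtain ⟨hgs, hga⟩ := hg
    have hganat := skew_nat g ((skew_iff g).mp hga)
    refine ⟨?_, ?_⟩
    · intro i j hij
      show (N * g - g * N) i j = 0
      rw [mapEntry g hgs, if_neg hij]
    · show (N * g - g * N)ᵀ * J = J * (N * g - g * N)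
      rw [symm_iff]
      intro i j
      rw [mapEntry g hgs, mapEntry g hgs]
      have hi := i.isLt
      have hj := j.isLt
      by_cases hc : (i : ℕ) + (j : ℕ) + k + 2 = n
      · have c1 : ((Fin.rev j : Fin n) : ℕ) = (i : ℕ) + k + 1 := by
          rw [Fin.val_rev]; omega
        have c2 : ((Fin.rev i : Fin n) : ℕ) = (j : ℕ) + k + 1 := by
          rw [Fin.val_rev]; omega
        rw [if_pos c1, if_pos c2]
        have e1 : stmt10ag n k g (i : ℕ) = - stmt10ag n k g ((j : ℕ) + 1) :=
          hganat _ _ (by omega)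
        have e2 : stmt10ag n k g ((i : ℕ) + 1) = - stmt10ag n k g (j : ℕ) :=
          hganat _ _ (by omega)
        rw [e1, e2]; ring
      · have c1 : ((Fin.rev j : Fin n) : ℕ) ≠ (i : ℕ) + k + 1 := by
          rw [Fin.val_rev]; omega
        have c2 : ((Fin.rev i : Fin n) : ℕ) ≠ (j : ℕ) + k + 1 := by
          rw [Fin.val_rev]; omega
        rw [if_neg c1, if_neg c2]
  -- InjOn
  · intro g hg g' hg' heq
    obtain ⟨hgs, hga⟩ := hg
    obtain ⟨hgs', hga'⟩ := hg'
    have heq' : N * g - g * N = N * g' - g' * N := heq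
    have hganat := skew_nat g ((skew_iff g).mp hga)
    have hganat' := skew_nat g' ((skew_iff g').mp hga')
    set e : ℕ → ℂ := fun t => stmt10ag n k g t - stmt10ag n k g' t with he
    have estep : ∀ t, t + k + 1 < n → e t = e (t + 1) := by
      intro t ht
      have h1 := congrFun (congrFun heq' ⟨t + k + 1, ht⟩) ⟨t, by omega⟩
      rw [mapEntry g hgs, mapEntry g' hgs'] at h1
      rw [if_pos (by simp), if_pos (by simp)] at h1
      simp only [Fin.val_mk] at h1
      simp only [he]
      linear_combination h1
    have econst : ∀ t, t ≤ n - k - 1 → e t = e 0 := by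
      intro t
      induction t with
      | zero => intro _; rfl
      | succ s ih =>
        intro hs
        rw [← estep s (by omega)]
        exact ih (by omega)
    have e0 : e 0 = 0 := by
      have h1 : e 0 = - e (n - k - 1) := by
        have a1 := hganat 0 (n - k - 1) (by omega)
        have a2 := hganat' 0 (n - k - 1) (by omega)
        simp only [he]
        rw [a1, a2]; ring
      have h2 := econst (n - k - 1) le_rfl
      rw [h2] at h1
      linear_combination h1 / 2
    have ezero : ∀ t, t ≤ n - k - 1 → e t = 0 := fun t ht => (econst t ht).trans e0
    ext i j
    rw [gform g hgs, gform g' hgs']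
    by_cases hij : (i : ℕ) = (j : ℕ) + k
    · rw [if_pos hij, if_pos hij]
      have hjr : (j : ℕ) ≤ n - k - 1 := by have := i.isLt; omega
      have key := ezero (j : ℕ) hjr
      simp only [he] at key
      linear_combination key
    · rw [if_neg hij, if_neg hij]
  -- SurjOn
  · intro h hh
    obtain ⟨hhs, hhsym⟩ := hh
    set b : ℕ → ℂ := fun t =>
      if ht : t + k + 1 < n then h ⟨t + k + 1, ht⟩ ⟨t, by omega⟩ else 0 with hbdef
    have hbzero : ∀ t, n - k - 2 < t → b t = 0 := by
      intro t ht
      simp only [hbdef]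
      rw [dif_neg (by omega)]
    have hbsym : ∀ s t : ℕ, s + t + k + 2 = n → b s = b t := by
      intro s t hst
      have hs : s < n := by omega
      have ht : t < n := by omega
      have key := ((symm_iff h).mp hhsym) ⟨s, hs⟩ ⟨t, ht⟩
      have h1 : (Fin.rev (⟨t, ht⟩ : Fin n)) = (⟨s + k + 1, by omega⟩ : Fin n) := by
        apply Fin.ext; rw [Fin.val_rev]; simp; omega
      have h2 : (Fin.rev (⟨s, hs⟩ : Fin n)) = (⟨t + k + 1, by omega⟩ : Fin n) := by
        apply Fin.ext; rw [Fin.val_rev]; simp; omega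
      rw [h1, h2] at key
      simp only [hbdef]
      rw [dif_pos (show s + k + 1 < n by omega), dif_pos (show t + k + 1 < n by omega)]
      exact key
    set S : ℂ := ∑ t ∈ Finset.range (n - k - 1), b t with hS
    set a : ℕ → ℂ := fun t => S / 2 - ∑ i ∈ Finset.range t, b i with ha
    set g : Matrix (Fin n) (Fin n) ℂ :=
      Matrix.of fun i j => if (i : ℕ) = (j : ℕ) + k then a (j : ℕ) else 0 with hgdef
    have hgs : ∀ i j : Fin n, (i : ℕ) ≠ (j : ℕ) + k → g i j = 0 := by
      intro i j hij
      simp only [hgdef, Matrix.of_apply]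
      rw [if_neg hij]
    have hag : ∀ t : ℕ, ∀ ht : t + k < n, stmt10ag n k g t = a t := by
      intro t ht
      rw [stmt10ag_pos n k g t ht]
      simp only [hgdef, Matrix.of_apply]
      rw [if_pos (by simp)]
    have akey : ∀ s t : ℕ, s + t + k + 1 = n → a s + a t = 0 := by
      intro s t hst
      by_cases hcase : k + 2 ≤ n
      · have hsum := stmt10_sum_reflect b (n - k - 2) s t (by omega)
          (fun u hu => hbsym _ _ (by omega)) hbzero
        have hM : n - k - 2 + 1 = n - k - 1 := by omega
        rw [hM, ← hS] at hsum
        simp only [ha]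
        linear_combination - hsum
      · have hs0 : s = 0 := by omega
        have ht0 : t = 0 := by omega
        have hS0 : S = 0 := by
          rw [hS, show n - k - 1 = 0 by omega, Finset.range_zero, Finset.sum_empty]
        subst hs0; subst ht0
        simp only [ha, Finset.range_zero, Finset.sum_empty, hS0]
        ring
    refine ⟨g, ⟨hgs, ?_⟩, ?_⟩
    · rw [skew_iff]
      intro i j
      have hi := i.isLt
      have hj := j.isLt
      simp only [hgdef, Matrix.of_apply]
      by_cases hc : (i : ℕ) + (j : ℕ) + k + 1 = n
      · have c1 : ((Fin.rev j : Fin n) : ℕ) = (i : ℕ) + k := by rw [Fin.val_rev]; omega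
        have c2 : ((Fin.rev i : Fin n) : ℕ) = (j : ℕ) + k := by rw [Fin.val_rev]; omega
        rw [if_pos c1, if_pos c2]
        linear_combination akey (i : ℕ) (j : ℕ) (by omega)
      · have c1 : ((Fin.rev j : Fin n) : ℕ) ≠ (i : ℕ) + k := by rw [Fin.val_rev]; omega
        have c2 : ((Fin.rev i : Fin n) : ℕ) ≠ (j : ℕ) + k := by rw [Fin.val_rev]; omega
        rw [if_neg c1, if_neg c2, neg_zero]
    · show N * g - g * N = h
      ext i j
      have hi := i.isLt
      have hj := j.isLt
      rw [mapEntry g hgs]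
      by_cases hij : (i : ℕ) = (j : ℕ) + k + 1
      · rw [if_pos hij]
        have h1 : stmt10ag n k g (j : ℕ) = a (j : ℕ) := hag _ (by omega)
        have h2 : stmt10ag n k g ((j : ℕ) + 1) = a ((j : ℕ) + 1) := hag _ (by omega)
        have h3 : a (j : ℕ) - a ((j : ℕ) + 1) = b (j : ℕ) := by
          simp only [ha]
          rw [Finset.sum_range_succ]
          ring
        have h4 : b (j : ℕ) = h i j := by
          simp only [hbdef]
          rw [dif_pos (show (j : ℕ) + k + 1 < n by omega)]
          exact congrArg₂ h (Fin.ext (by simp; omega)) (Fin.ext rfl)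
        rw [h1, h2, h3, h4]
      · rw [if_neg hij]
        exact (hhs i j hij).symm
end

section
/- Let n ≥ 1 and 1 ≤ k ≤ n − 1, and let J be the n×n antidiagonal matrix with J_{i,j} = 1 if i + j = n + 1 and 0 otherwise. The complex dimension of the space of n×n complex matrices g with g_{i,j} = 0 unless i = j + k and gᵀ·J = −J·g equals (n−k)/2 if n ≡ k mod 2, and equals (n−k−1)/2 if n ≢ k mod 2. -/
open Matrix

/-- For `1 ≤ k ≤ n-1`, the dimension of the space of weight-`k` matrices that
are skew with respect to the antidiagonal form `J` equals `(n-k)/2` when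
`n ≡ k (mod 2)` and `(n-k-1)/2` otherwise. -/
theorem stmt_11 (n k : ℕ) (hn : 1 ≤ n) (hk1 : 1 ≤ k) (hk : k ≤ n - 1)
    (J : Matrix (Fin n) (Fin n) ℂ)
    (hJ : ∀ i j, J i j = if (i : ℕ) + (j : ℕ) + 1 = n then 1 else 0)
    (W : Submodule ℂ (Matrix (Fin n) (Fin n) ℂ))
    (hW : ∀ g, g ∈ W ↔
      ((∀ (i j : Fin n), (i : ℕ) ≠ (j : ℕ) + k → g i j = 0) ∧ gᵀ * J = -(J * g))) :
    Module.finrank ℂ W = if n % 2 = k % 2 then (n - k) / 2 else (n - k - 1) / 2 := by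
  have hkn : k < n := by omega
  set m := n - k with hm
  -- reversal map
  have rev_lt : ∀ i : Fin n, n - 1 - (i : ℕ) < n := fun i => by omega
  set rev : Fin n → Fin n := fun i => ⟨n - 1 - (i : ℕ), rev_lt i⟩ with hrev
  -- sum computations
  have e1 : ∀ (x : Matrix (Fin n) (Fin n) ℂ) (a b : Fin n),
      (∑ l, x l a * (if (l : ℕ) + (b : ℕ) + 1 = n then (1 : ℂ) else 0)) = x (rev b) a := by
    intro x a b
    rw [Finset.sum_eq_single (rev b)]
    · have : ((rev b : Fin n) : ℕ) + (b : ℕ) + 1 = n := by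
        simp only [hrev]; have := b.isLt; omega
      simp [this]
    · intro l _ hl
      have : ¬ ((l : ℕ) + (b : ℕ) + 1 = n) := by
        intro h; apply hl; apply Fin.ext; simp only [hrev]; omega
      simp [this]
    · intro h; exact absurd (Finset.mem_univ _) h
  have e2 : ∀ (x : Matrix (Fin n) (Fin n) ℂ) (a b : Fin n),
      (∑ l : Fin n, (if (a : ℕ) + (l : ℕ) + 1 = n then (1 : ℂ) else 0) * x l b) = x (rev a) b := by
    intro x a b
    rw [Finset.sum_eq_single (rev a)]
    · have : (a : ℕ) + ((rev a : Fin n) : ℕ) + 1 = n := by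
        simp only [hrev]; have := a.isLt; omega
      simp [this]
    · intro l _ hl
      have : ¬ ((a : ℕ) + (l : ℕ) + 1 = n) := by
        intro h; apply hl; apply Fin.ext; simp only [hrev]; omega
      simp [this]
    · intro h; exact absurd (Finset.mem_univ _) h
  -- pointwise relation
  have rel : ∀ g ∈ W, ∀ i j : Fin n, g (rev j) i = - g (rev i) j := by
    intro g hg i j
    have h := ((hW g).mp hg).2
    have h2 := congrFun (congrFun h i) j
    simp only [Matrix.mul_apply, Matrix.transpose_apply, Matrix.neg_apply, hJ] at h2
    rw [e1 g i j, e2 g i j] at h2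
    exact h2
  -- the linear map to coordinates
  have memlt : ∀ (i : Fin (m / 2)), (i : ℕ) + k < n := fun i => by
    have := i.isLt; omega
  have memlt' : ∀ (i : Fin (m / 2)), (i : ℕ) < n := fun i => by
    have := i.isLt; omega
  let L : W →ₗ[ℂ] (Fin (m / 2) → ℂ) :=
    { toFun := fun g i => (g : Matrix (Fin n) (Fin n) ℂ) ⟨(i : ℕ) + k, memlt i⟩ ⟨(i : ℕ), memlt' i⟩
      map_add' := fun g h => by funext i; simp
      map_smul' := fun c g => by funext i; simp }
  have hinj : Function.Injective L := by
    rw [← LinearMap.ker_eq_bot, LinearMap.ker_eq_bot']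
    intro g hg0
    obtain ⟨hsupp, -⟩ := (hW g.1).mp g.2
    have hval : ∀ i : Fin (m / 2),
        (g : Matrix (Fin n) (Fin n) ℂ) ⟨(i : ℕ) + k, memlt i⟩ ⟨(i : ℕ), memlt' i⟩ = 0 := by
      intro i
      have := congrFun hg0 i
      simpa [L] using this
    apply Subtype.ext
    apply Matrix.ext
    intro i j
    simp only [ZeroMemClass.coe_zero, Matrix.zero_apply]
    by_cases hij : (i : ℕ) = (j : ℕ) + k
    · -- j < m
      have hjm : (j : ℕ) < m := by have := i.isLt; omega
      by_cases hj2 : (j : ℕ) < m / 2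
      · have h0 := hval ⟨(j : ℕ), hj2⟩
        convert h0 using 2
        exact Fin.ext (by simpa using hij)
      · -- use the relation
        have hb : m - 1 - (j : ℕ) < n := by omega
        have hrel := rel g.1 g.2 j ⟨m - 1 - (j : ℕ), hb⟩
        -- rel gives g (rev ⟨m-1-j⟩) j = - g (rev j) ⟨m-1-j⟩
        have hx : rev ⟨m - 1 - (j : ℕ), hb⟩ = i := by
          apply Fin.ext; simp only [hrev]; omega
        have hb2 : (m - 1 - (j : ℕ)) + k < n := by omega
        have hy : rev j = ⟨(m - 1 - (j : ℕ)) + k, hb2⟩ := by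
          apply Fin.ext; simp only [hrev]; have := j.isLt; omega
        rw [hx, hy] at hrel
        -- hrel : g i j = - g ⟨m-1-j+k⟩ ⟨m-1-j⟩
        by_cases hmid : m - 1 - (j : ℕ) < m / 2
        · have h0 := hval ⟨m - 1 - (j : ℕ), hmid⟩
          have hz : (g : Matrix (Fin n) (Fin n) ℂ) ⟨(m - 1 - (j : ℕ)) + k, hb2⟩
              ⟨m - 1 - (j : ℕ), hb⟩ = 0 := by
            convert h0 using 2
          rw [hz] at hrel; simpa using hrel
        · -- middle index: m odd, j = m/2
          have hjeq : m - 1 - (j : ℕ) = (j : ℕ) := by omega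
          have e3 : (⟨(m - 1 - (j : ℕ)) + k, hb2⟩ : Fin n) = i := by
            apply Fin.ext
            show (m - 1 - (j : ℕ)) + k = (i : ℕ)
            omega
          have e4 : (⟨m - 1 - (j : ℕ), hb⟩ : Fin n) = j := by
            apply Fin.ext
            exact hjeq
          rw [e3, e4] at hrel
          -- g i j = - g i j
          have h2 : (2 : ℂ) * (g : Matrix (Fin n) (Fin n) ℂ) i j = 0 := by
            rw [two_mul]; linear_combination hrel
          have := mul_eq_zero.mp h2
          rcases this with h | h
          · norm_num at h
          · exact h
    · exact hsupp i j hij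
  have hsurj : Function.Surjective L := by
    intro v
    set a : ℕ → ℂ := fun j => if h : j < m / 2 then v ⟨j, h⟩ else 0 with ha
    set f : ℕ → ℂ := fun j => a j - a (m - 1 - j) with hf
    set g : Matrix (Fin n) (Fin n) ℂ :=
      fun i j => if (i : ℕ) = (j : ℕ) + k then f (j : ℕ) else 0 with hg
    have hgW : g ∈ W := by
      rw [hW]
      constructor
      · intro i j hij; simp [hg, hij]
      · apply Matrix.ext
        intro i j
        simp only [Matrix.mul_apply, Matrix.transpose_apply, Matrix.neg_apply, hJ]
        rw [e1 g i j, e2 g i j]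
        simp only [hg, hrev]
        by_cases h : (i : ℕ) + (j : ℕ) + k + 1 = n
        · have hc1 : n - 1 - (j : ℕ) = (i : ℕ) + k := by have := j.isLt; omega
          have hc2 : n - 1 - (i : ℕ) = (j : ℕ) + k := by have := i.isLt; omega
          simp only [hc1, hc2, if_pos rfl]
          have hji : (j : ℕ) = m - 1 - (i : ℕ) := by omega
          have hij' : (i : ℕ) = m - 1 - (j : ℕ) := by omega
          simp only [hf]
          rw [← hji, ← hij']
          simp only [if_true]
          ring
        · have hc1 : ¬ (n - 1 - (j : ℕ) = (i : ℕ) + k) := by have := j.isLt; omega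
          have hc2 : ¬ (n - 1 - (i : ℕ) = (j : ℕ) + k) := by have := i.isLt; omega
          simp [hc1, hc2]
    refine ⟨⟨g, hgW⟩, ?_⟩
    funext i
    have hik : ((⟨(i : ℕ) + k, memlt i⟩ : Fin n) : ℕ) = ((⟨(i : ℕ), memlt' i⟩ : Fin n) : ℕ) + k := rfl
    simp only [L, LinearMap.coe_mk, AddHom.coe_mk, hg, hik, if_pos rfl]
    have him : (i : ℕ) < m / 2 := i.isLt
    have hnot : ¬ (m - 1 - (i : ℕ) < m / 2) := by omega
    simp only [hf, ha]
    rw [dif_pos him, dif_neg hnot]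
    simp
  have hequiv : W ≃ₗ[ℂ] (Fin (m / 2) → ℂ) := LinearEquiv.ofBijective L ⟨hinj, hsurj⟩
  rw [hequiv.finrank_eq]
  rw [Module.finrank_fin_fun]
  split_ifs with h
  · omega
  · omega
end

section
/- Let n ≥ 1. The set S = {(M, μ) ∈ GL(n,ℂ) × U(1) : there exist A ∈ GL(n,ℝ) and λ ∈ U(1) with M = λ·A_ℂ and μ = λ²} is a closed subset of GL(n,ℂ) × U(1). -/
open Matrix

lemma circle_mul_conj (z : Circle) : (z : ℂ) * (starRingEnd ℂ) (z : ℂ) = 1 := by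
  rw [← Circle.coe_inv_eq_conj, ← Circle.coe_mul, mul_inv_cancel, Circle.coe_one]

/-- The image of `EGL(n,ℝ) = (GL(n,ℝ) × U(1))/±` in `GL(n,ℂ) × U(1)` under
`[(A,λ)] ↦ (λ·A_ℂ, λ²)` is a closed subset. -/
theorem stmt_13 (n : ℕ) (hn : 1 ≤ n) :
    IsClosed {p : GL (Fin n) ℂ × Circle |
      ∃ (A : GL (Fin n) ℝ) (z : Circle),
        (p.1 : Matrix (Fin n) (Fin n) ℂ)
            = (z : ℂ) • ((A : Matrix (Fin n) (Fin n) ℝ).map (algebraMap ℝ ℂ)) ∧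
        (p.2 : ℂ) = (z : ℂ) ^ 2} := by
  have hset : {p : GL (Fin n) ℂ × Circle |
      ∃ (A : GL (Fin n) ℝ) (z : Circle),
        (p.1 : Matrix (Fin n) (Fin n) ℂ)
            = (z : ℂ) • ((A : Matrix (Fin n) (Fin n) ℝ).map (algebraMap ℝ ℂ)) ∧
        (p.2 : ℂ) = (z : ℂ) ^ 2}
      = ⋂ i : Fin n, ⋂ j : Fin n,
        {p : GL (Fin n) ℂ × Circle |
          (p.1 : Matrix (Fin n) (Fin n) ℂ) i j
            = (p.2 : ℂ) * (starRingEnd ℂ) ((p.1 : Matrix (Fin n) (Fin n) ℂ) i j)} := by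
    ext p
    simp only [Set.mem_setOf_eq, Set.mem_iInter]
    constructor
    · rintro ⟨A, z, hM, hμ⟩ i j
      have hij : (p.1 : Matrix (Fin n) (Fin n) ℂ) i j
          = (z : ℂ) * ((A : Matrix (Fin n) (Fin n) ℝ) i j : ℂ) := by
        rw [hM]; simp [Matrix.map_apply]
      rw [hij, hμ]
      rw [_root_.map_mul, Complex.conj_ofReal]
      have := circle_mul_conj z
      linear_combination (-(((A : Matrix (Fin n) (Fin n) ℝ) i j : ℂ) * (z : ℂ))) * this
    · intro h
      -- square root of p.2
      obtain ⟨z, hz⟩ : ∃ z : Circle, z ^ 2 = p.2 :=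
        ⟨Circle.exp (Complex.arg p.2 / 2), by
          rw [sq, ← Circle.exp_add]
          simpa using Circle.exp_arg p.2⟩
      set M : Matrix (Fin n) (Fin n) ℂ := (p.1 : Matrix (Fin n) (Fin n) ℂ)
      have hzz : (z : ℂ) * (starRingEnd ℂ) (z : ℂ) = 1 := circle_mul_conj z
      -- the candidate real matrix
      have hreal : ∀ i j, (starRingEnd ℂ) ((starRingEnd ℂ) (z : ℂ) * M i j)
          = (starRingEnd ℂ) (z : ℂ) * M i j := by
        intro i j
        have hconjM : (starRingEnd ℂ) (M i j) = (starRingEnd ℂ) (p.2 : ℂ) * M i j := by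
          conv_lhs => rw [h i j]
          rw [_root_.map_mul, RingHomInvPair.comp_apply_eq₂]
        rw [_root_.map_mul, RingHomInvPair.comp_apply_eq₂, hconjM, ← hz]
        rw [show ((z ^ 2 : Circle) : ℂ) = (z : ℂ) ^ 2 from by norm_cast, map_pow]
        calc (z:ℂ) * ((starRingEnd ℂ) (z:ℂ) ^ 2 * M i j)
            = ((z:ℂ) * (starRingEnd ℂ) (z:ℂ)) * ((starRingEnd ℂ) (z:ℂ) * M i j) := by ring
          _ = (starRingEnd ℂ) (z:ℂ) * M i j := by rw [hzz, one_mul]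
      set B : Matrix (Fin n) (Fin n) ℝ :=
        fun i j => ((starRingEnd ℂ) (z : ℂ) * M i j).re with hB
      have hmap : B.map (algebraMap ℝ ℂ) = (starRingEnd ℂ) (z : ℂ) • M := by
        ext i j
        simp only [Matrix.map_apply, Matrix.smul_apply, smul_eq_mul, hB]
        rw [Complex.coe_algebraMap]
        exact Complex.conj_eq_iff_re.mp (hreal i j)
      -- B is invertible
      have hdetM : IsUnit M.det := (Matrix.isUnit_iff_isUnit_det M).mp p.1.isUnit
      have hdetB : IsUnit B.det := by
        have h1 : (algebraMap ℝ ℂ) B.det = (B.map (algebraMap ℝ ℂ)).det :=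
          (RingHom.map_det (algebraMap ℝ ℂ) B).symm ▸ rfl
        have h2 : (B.map (algebraMap ℝ ℂ)).det = ((starRingEnd ℂ) (z : ℂ)) ^ n * M.det := by
          rw [hmap, Matrix.det_smul, Fintype.card_fin]
        have hne : (algebraMap ℝ ℂ) B.det ≠ 0 := by
          rw [h1, h2]
          apply mul_ne_zero
          · apply pow_ne_zero
            intro hc
            have : ((z : ℂ) * (starRingEnd ℂ) (z : ℂ)) = 0 := by rw [hc, mul_zero]
            rw [hzz] at this; exact one_ne_zero this
          · exact hdetM.ne_zero
        have : B.det ≠ 0 := fun hc => hne (by rw [hc, map_zero])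
        exact isUnit_iff_ne_zero.mpr this
      have hBunit : IsUnit B := (Matrix.isUnit_iff_isUnit_det B).mpr hdetB
      refine ⟨hBunit.unit, z, ?_, ?_⟩
      · have hcoe : (hBunit.unit : Matrix (Fin n) (Fin n) ℝ) = B := rfl
        rw [hcoe, hmap]
        ext i j
        simp only [Matrix.smul_apply, smul_eq_mul]
        calc M i j = 1 * M i j := (one_mul _).symm
          _ = ((z:ℂ) * (starRingEnd ℂ) (z:ℂ)) * M i j := by rw [hzz]
          _ = (z:ℂ) * ((starRingEnd ℂ) (z:ℂ) * M i j) := by ring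
      · rw [← hz]; norm_cast
  rw [hset]
  refine isClosed_iInter fun i => isClosed_iInter fun j => ?_
  have hc1 : Continuous fun p : GL (Fin n) ℂ × Circle =>
      (p.1 : Matrix (Fin n) (Fin n) ℂ) i j :=
    ((Units.continuous_val.comp continuous_fst).matrix_elem i j)
  have hc2 : Continuous fun p : GL (Fin n) ℂ × Circle => (p.2 : ℂ) :=
    continuous_subtype_val.comp continuous_snd
  exact isClosed_eq hc1 (hc2.mul (Complex.continuous_conj.comp hc1))
end
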